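/- arXiv:1409.1487 — 7 statements merged into one kernel-verified Lean document; each statement's English description precedes it below -/
import Mathlib

section
/- In the perception game with T = {ℓ, r}, A = {L, R}, uniform prior, and utility u(t, a, p) = 1_{t matches a} − 2·|p(ℓ) − 1/2|, there is no perception equilibrium in which some type plays a strictly mixed (non-degenerate) strategy. That is, in every perception equilibrium, each type plays a pure action. -/
open Finset

section PerceptionGame
variable {T A : Type*} [Fintype T] [Fintype A]

/-- Total probability of action `a` under prior `β` and strategy `σ`. -/
def actProb (β : T → ℝ) (σ : T → A → ℝ) (a : A) : ℝ := ∑ t, β t * σ t a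

/-- Bayesian consistency of a perception with the prior and strategy. -/
def Consistent (β : T → ℝ) (σ : T → A → ℝ) (τ : T → A → T → ℝ) : Prop :=
  ∀ a, 0 < actProb β σ a → ∀ t tb, τ t a tb = β tb * σ tb a / actProb β σ a

/-- Expected utility of type `t` playing mixed action `s`, given perception `τ`. -/
def ExpUtil (u : T → A → (T → ℝ) → ℝ) (τ : T → A → T → ℝ) (t : T) (s : A → ℝ) : ℝ :=
  ∑ a, s a * u t a (τ t a)

/-- Perception equilibrium: a consistent strategy–perception pair where
every type's strategy is a best reply. -/
def PerceptionEqm (β : T → ℝ) (u : T → A → (T → ℝ) → ℝ)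
    (σ : T → A → ℝ) (τ : T → A → T → ℝ) : Prop :=
  (∀ t, σ t ∈ stdSimplex ℝ A) ∧ (∀ t a, τ t a ∈ stdSimplex ℝ T) ∧
  Consistent β σ τ ∧
  ∀ t, ∀ s ∈ stdSimplex ℝ A, ExpUtil u τ t s ≤ ExpUtil u τ t (σ t)

end PerceptionGame

/-- Alice's game: types `true = ℓ`, `false = r`; actions `true = L`, `false = R`;
uniform prior; utility = match indicator minus privacy penalty. -/
noncomputable def aliceU (t a : Bool) (p : Bool → ℝ) : ℝ :=
  (if t = a then 1 else 0) - 2 * |p true - 1/2|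

noncomputable def aliceβ : Bool → ℝ := fun _ => 1/2

/-- in every perception equilibrium of Alice's game, each type
plays a pure action (no strictly mixed strategies). -/
theorem alice_no_mixed_equilibrium
    (σ : Bool → Bool → ℝ) (τ : Bool → Bool → Bool → ℝ)
    (h : PerceptionEqm aliceβ aliceU σ τ) :
    ∀ t, ∃ a, σ t a = 1 := by
  obtain ⟨hσ, hτ, hc, hbr⟩ := h
  intro t
  by_contra hno
  push_neg at hno
  obtain ⟨hpos, hsum⟩ := hσ t
  rw [Fintype.sum_bool] at hsum
  have hTpos : 0 < σ t true := by
    rcases lt_or_eq_of_le (hpos true) with h1 | h1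
    · exact h1
    · exact absurd (by linarith : σ t false = 1) (hno false)
  have hFpos : 0 < σ t false := by
    rcases lt_or_eq_of_le (hpos false) with h1 | h1
    · exact h1
    · exact absurd (by linarith : σ t true = 1) (hno true)
  obtain ⟨hnT, hsT⟩ := hσ true
  obtain ⟨hnF, hsF⟩ := hσ false
  rw [Fintype.sum_bool] at hsT hsF
  have hact : ∀ a, actProb aliceβ σ a = 1/2 * σ true a + 1/2 * σ false a := by
    intro a; simp [actProb, aliceβ, Fintype.sum_bool]
  have hactpos : ∀ a, 0 < actProb aliceβ σ a := by
    intro a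
    have h1 := hnT a; have h2 := hnF a
    have h3 := hpos a
    rw [hact]
    cases t <;> cases a <;>
      linarith [hTpos, hFpos, hnT true, hnT false, hnF true, hnF false]
  have hbayes : ∀ t' a tb, τ t' a tb = 1/2 * σ tb a / actProb aliceβ σ a := by
    intro t' a tb
    have := hc a (hactpos a) t' tb
    simpa [aliceβ] using this
  have hEx : ∀ s : Bool → ℝ, ExpUtil aliceU τ t s
      = s true * aliceU t true (τ t true) + s false * aliceU t false (τ t false) := by
    intro s; simp [ExpUtil, Fintype.sum_bool]
  have hδ : ∀ a : Bool, (fun b => if b = a then (1:ℝ) else 0) ∈ stdSimplex ℝ Bool := by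
    intro a
    refine ⟨fun b => by positivity, ?_⟩
    rw [Fintype.sum_bool]; cases a <;> norm_num
  set UT := aliceU t true (τ t true) with hUT
  set UF := aliceU t false (τ t false) with hUF
  have hbrT := hbr t _ (hδ true)
  have hbrF := hbr t _ (hδ false)
  rw [hEx, hEx] at hbrT hbrF
  norm_num at hbrT hbrF
  have hindiff : UT = UF := by
    have hx : σ t true = 1 - σ t false := by linarith
    have hy : σ t false = 1 - σ t true := by linarith
    have h1 : σ t false * UT ≤ σ t false * UF := by
      rw [hx] at hbrT; nlinarith [hbrT]
    have h2 : σ t true * UF ≤ σ t true * UT := by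
      rw [hy] at hbrF; nlinarith [hbrF]
    have h1' : UT ≤ UF := le_of_mul_le_mul_left h1 hFpos
    have h2' : UF ≤ UT := le_of_mul_le_mul_left h2 hTpos
    linarith
  have hpbd : ∀ a, 0 ≤ τ t a true ∧ τ t a true ≤ 1 := by
    intro a
    obtain ⟨hn, hs⟩ := hτ t a
    rw [Fintype.sum_bool] at hs
    exact ⟨hn true, by have := hn false; linarith⟩
  set pL := τ t true true with hpL
  set pR := τ t false true with hpR
  obtain ⟨hpL0, hpL1⟩ := hpbd true
  obtain ⟨hpR0, hpR1⟩ := hpbd false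
  have hUTv : UT = (if t = true then (1:ℝ) else 0) - 2 * |pL - 1/2| := rfl
  have hUFv : UF = (if t = false then (1:ℝ) else 0) - 2 * |pR - 1/2| := rfl
  have heL : pL * (1/2 * σ true true + 1/2 * σ false true) = 1/2 * σ true true := by
    rw [hpL, hbayes t true true, ← hact true]
    exact div_mul_cancel₀ _ (hactpos true).ne'
  have heR : pR * (1/2 * σ true false + 1/2 * σ false false) = 1/2 * σ true false := by
    rw [hpR, hbayes t false true, ← hact false]
    exact div_mul_cancel₀ _ (hactpos false).ne'
  have habL : |pL - 1/2| ≤ 1/2 := abs_le.mpr ⟨by linarith, by linarith⟩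
  have habR : |pR - 1/2| ≤ 1/2 := abs_le.mpr ⟨by linarith, by linarith⟩
  have habL0 : 0 ≤ |pL - 1/2| := abs_nonneg _
  have habR0 : 0 ≤ |pR - 1/2| := abs_nonneg _
  cases t with
  | true =>
    norm_num at hUTv hUFv
    have haL : |pL - 1/2| = 1/2 := by linarith [hindiff]
    have haR : |pR - 1/2| = 0 := by linarith [hindiff]
    have hpRv : pR = 1/2 := by have := abs_eq_zero.mp haR; linarith
    rcases abs_cases (pL - 1/2) with ⟨h1, h2⟩ | ⟨h1, h2⟩
    · have hpLv : pL = 1 := by rw [h1] at haL; linarith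
      rw [hpLv] at heL
      rw [hpRv] at heR
      linarith [hTpos]
    · have hpLv : pL = 0 := by rw [h1] at haL; linarith
      rw [hpLv] at heL
      linarith [hTpos]
  | false =>
    norm_num at hUTv hUFv
    have haR : |pR - 1/2| = 1/2 := by linarith [hindiff]
    have haL : |pL - 1/2| = 0 := by linarith [hindiff]
    have hpLv : pL = 1/2 := by have := abs_eq_zero.mp haL; linarith
    rcases abs_cases (pR - 1/2) with ⟨h1, h2⟩ | ⟨h1, h2⟩
    · have hpRv : pR = 1 := by rw [h1] at haR; linarith
      rw [hpRv] at heR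
      linarith [hFpos]
    · have hpRv : pR = 0 := by rw [h1] at haR; linarith
      rw [hpRv] at heR
      rw [hpLv] at heL
      linarith [hFpos]
end

section
/- Let (T, A, β, u) be a finite single-player perception game in which the decision maker has upper privacy concerns, i.e., for every type t and action a, the prior β maximizes μ ↦ u(t, a, μ) over Δ(T). Then a fully pooling perception equilibrium (all types play the same pure action with probability 1) exists if and only if the intersection over all types t of L(t) is nonempty, where L(t) is the set of actions a such that for every action a′ there exist beliefs μ, μ′ ∈ Δ(T) with u(t, a, μ) ≥ u(t, a′, μ′). -/
open Finset

section Privacy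
variable {T A : Type*} [Fintype T] [Fintype A] [DecidableEq T] [DecidableEq A]

/-- Dirac (point-mass) measure on a type. -/
def dirac (t : T) : T → ℝ := fun s => if s = t then 1 else 0

/-- Upper privacy concerns: the prior is an optimal perception for every type and action. -/
def UpperPrivacy (β : T → ℝ) (u : T → A → (T → ℝ) → ℝ) : Prop :=
  ∀ t a, ∀ μ ∈ stdSimplex ℝ T, u t a μ ≤ u t a β

/-- Lower privacy concerns: full revelation is a worst perception for every type and action. -/
def LowerPrivacy (u : T → A → (T → ℝ) → ℝ) : Prop :=
  ∀ t a, ∀ μ ∈ stdSimplex ℝ T, u t a (dirac t) ≤ u t a μ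

/-- `a ∈ L(t)`: `a` is potentially optimal for type `t`. -/
def PotOpt (u : T → A → (T → ℝ) → ℝ) (t : T) (a : A) : Prop :=
  ∀ a', ∃ μ ∈ stdSimplex ℝ T, ∃ μ' ∈ stdSimplex ℝ T, u t a' μ' ≤ u t a μ

/-- `a ∈ M(t)`: `a` is potentially optimal at the extremes for type `t`. -/
def PotOptExt (β : T → ℝ) (u : T → A → (T → ℝ) → ℝ) (t : T) (a : A) : Prop :=
  ∀ a', u t a' (dirac t) ≤ u t a β

end Privacy

/-- Theorem 1: under upper privacy concerns, a fully pooling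
perception equilibrium exists iff `⋂ₜ L(t) ≠ ∅`. -/
theorem pooling_iff_upper
    {T A : Type*} [Fintype T] [Fintype A] [DecidableEq T] [DecidableEq A]
    [Nonempty T] [Nonempty A]
    (β : T → ℝ) (hβ : β ∈ stdSimplex ℝ T)
    (u : T → A → (T → ℝ) → ℝ) (hup : UpperPrivacy β u) :
    (∃ (a : A) (σ : T → A → ℝ) (τ : T → A → T → ℝ),
        PerceptionEqm β u σ τ ∧ ∀ t a', σ t a' = if a' = a then 1 else 0) ↔
      ∃ a, ∀ t, PotOpt u t a := by
  have hβmem : β ∈ stdSimplex ℝ T := hβ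
  constructor
  · rintro ⟨a, σ, τ, ⟨hσs, hτs, hcons, hbr⟩, hσ⟩
    refine ⟨a, fun t a' => ?_⟩
    have hact : actProb β σ a = 1 := by
      simp only [actProb, hσ]
      simp [hβ.2]
    have hτa : τ t a = β := by
      funext tb
      have := hcons a (by rw [hact]; norm_num) t tb
      rw [this, hσ, hact]
      simp
    have hpure : (fun x => if x = a' then (1:ℝ) else 0) ∈ stdSimplex ℝ A := by
      constructor
      · intro x; dsimp; split <;> norm_num
      · simp
    have hb := hbr t _ hpure
    have h1 : ExpUtil u τ t (fun x => if x = a' then (1:ℝ) else 0) = u t a' (τ t a') := by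
      simp [ExpUtil, ite_mul, Finset.sum_ite_eq']
    have h2 : ExpUtil u τ t (σ t) = u t a β := by
      simp only [ExpUtil, hσ]
      rw [show (∑ x, (if x = a then (1:ℝ) else 0) * u t x (τ t x)) = u t a (τ t a) by
        simp [ite_mul, Finset.sum_ite_eq']]
      rw [hτa]
    rw [h1, h2] at hb
    exact ⟨β, hβ, τ t a', hτs t a', hb⟩
  · rintro ⟨a, hL⟩
    choose μ hμ μ' hμ' hle using fun t => hL t
    refine ⟨a, fun t a' => if a' = a then 1 else 0,
      fun t a' => if a' = a then β else μ' t a', ⟨?_, ?_, ?_, ?_⟩, fun _ _ => rfl⟩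
    · intro t
      constructor
      · intro x; dsimp; split <;> norm_num
      · simp
    · intro t a'
      dsimp; split
      · exact hβ
      · exact hμ' t a'
    · intro a' hpos t tb
      have hact : ∀ b : A, actProb β (fun t a' => if a' = a then (1:ℝ) else 0) b
          = if b = a then 1 else 0 := by
        intro b
        simp only [actProb]
        split
        · simp [hβ.2]
        · simp
      rw [hact] at hpos ⊢
      by_cases hb : a' = a
      · subst hb; simp
      · simp [hb] at hpos
    · intro t s hs
      have key : ∀ a', u t a' (if a' = a then β else μ' t a') ≤ u t a β := by
        intro a'
        by_cases h : a' = a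
        · subst h; simp
        · rw [if_neg h]; exact le_trans (hle t a') (hup t a (μ t a') (hμ t a'))
      have hsum : ExpUtil u (fun t a' => if a' = a then β else μ' t a') t s ≤
          ∑ a', s a' * u t a β := by
        apply Finset.sum_le_sum
        intro a' _
        exact mul_le_mul_of_nonneg_left (key a') (hs.1 a')
      have hE2 : ExpUtil u (fun t a' => if a' = a then β else μ' t a') t
          (fun a' => if a' = a then 1 else 0) = u t a β := by
        simp [ExpUtil, ite_mul, Finset.sum_ite_eq']
      rw [hE2]
      calc ExpUtil u (fun t a' => if a' = a then β else μ' t a') t s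
          ≤ ∑ a', s a' * u t a β := hsum
        _ = (∑ a', s a') * u t a β := by rw [Finset.sum_mul]
        _ = u t a β := by rw [hs.2, one_mul]
end

section
/- Let (T, A, β, u) be a finite single-player perception game in which the decision maker has lower privacy concerns, i.e., for every type t and action a, the Dirac measure χ(t) on t minimizes μ ↦ u(t, a, μ) over Δ(T). Then a fully pooling perception equilibrium exists if and only if the intersection over all types t of M(t) is nonempty, where M(t) is the set of actions a such that for every action a′, u(t, a, β) ≥ u(t, a′, χ(t)). -/
open Finset

/-- Theorem 2: under lower privacy concerns, a fully pooling
perception equilibrium exists iff `⋂ₜ M(t) ≠ ∅`. -/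
theorem pooling_iff_lower
    {T A : Type*} [Fintype T] [Fintype A] [DecidableEq T] [DecidableEq A]
    [Nonempty T] [Nonempty A]
    (β : T → ℝ) (hβ : β ∈ stdSimplex ℝ T)
    (u : T → A → (T → ℝ) → ℝ) (hlow : LowerPrivacy u) :
    (∃ (a : A) (σ : T → A → ℝ) (τ : T → A → T → ℝ),
        PerceptionEqm β u σ τ ∧ ∀ t a', σ t a' = if a' = a then 1 else 0) ↔
      ∃ a, ∀ t, PotOptExt β u t a  := by
  constructor
  · rintro ⟨a, σ, τ, ⟨hσsimp, hτsimp, hcons, hbr⟩, hσ⟩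
    refine ⟨a, fun t a' => ?_⟩
    have hprob : actProb β σ a = 1 := by
      simp only [actProb, hσ]
      simp [hβ.2]
    have hτa : ∀ t', τ t' a = β := by
      intro t'
      funext tb
      rw [hcons a (by rw [hprob]; norm_num) t' tb, hσ, hprob]
      simp
    have hind : (fun b => if b = a' then (1:ℝ) else 0) ∈ stdSimplex ℝ A := by
      constructor
      · intro b; dsimp; split <;> norm_num
      · simp
    have h1 : ExpUtil u τ t (fun b => if b = a' then (1:ℝ) else 0)
        ≤ ExpUtil u τ t (σ t) := hbr t _ hind
    have h2 : ExpUtil u τ t (fun b => if b = a' then (1:ℝ) else 0)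
        = u t a' (τ t a') := by
      simp [ExpUtil, Finset.sum_ite_eq']
    have h3 : ExpUtil u τ t (σ t) = u t a (τ t a) := by
      simp only [ExpUtil, hσ]
      simp [Finset.sum_ite_eq']
    have h4 : u t a' (dirac t) ≤ u t a' (τ t a') :=
      hlow t a' _ (hτsimp t a')
    rw [h2, h3, hτa t] at h1
    linarith
  · rintro ⟨a, hM⟩
    refine ⟨a, fun t a' => if a' = a then 1 else 0,
      fun t a' => if a' = a then β else dirac t, ⟨?_, ?_, ?_, ?_⟩, fun _ _ => rfl⟩
    · intro t
      constructor
      · intro b; dsimp; split <;> norm_num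
      · simp
    · intro t a'
      dsimp
      split
      · exact hβ
      · constructor
        · intro s; simp only [dirac]; split <;> norm_num
        · simp [dirac]
    · intro a'' hpos t tb
      have hprob : actProb β (fun t a' => if a' = a then (1:ℝ) else 0) a''
          = if a'' = a then 1 else 0 := by
        simp only [actProb]
        split
        · simp [hβ.2]
        · simp
      by_cases h : a'' = a
      · subst h
        rw [hprob] at *
        simp
      · rw [hprob] at hpos
        simp [h] at hpos
    · intro t s hs
      have hτeq : ∀ a', u t a' (if a' = a then β else dirac t) ≤ u t a β := by
        intro a'
        split
        · rename_i h; subst h; exact le_refl _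
        · exact hM t a'
      have hle : ExpUtil u (fun t a' => if a' = a then β else dirac t) t s ≤ u t a β := by
        unfold ExpUtil
        calc ∑ a', s a' * u t a' (if a' = a then β else dirac t)
            ≤ ∑ a', s a' * u t a β := by
              apply Finset.sum_le_sum
              intro a' _
              exact mul_le_mul_of_nonneg_left (hτeq a') (hs.1 a')
          _ = u t a β := by rw [← Finset.sum_mul, hs.2, one_mul]
      have heq : ExpUtil u (fun t a' => if a' = a then β else dirac t) t
          (fun a' => if a' = a then (1:ℝ) else 0) = u t a β := by
        simp [ExpUtil, Finset.sum_ite_eq']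
      rw [heq]
      exact hle
end

section
/- (Sufficiency direction, upper privacy.) In a finite single-player perception game where the decision maker has upper privacy concerns, if there exists an action a that is potentially optimal for every type (a ∈ ∩_t L(t)), then the strategy in which all types play a, together with the perception assigning β after a and, for each type t and each off-path action a′, a belief μ_{t,a′} witnessing a's potential optimality, is a perception equilibrium. -/
open Finset

/-- sufficiency, upper privacy: if `a ∈ ⋂ₜ L(t)` then pooling on
`a`, with perception `β` on-path and witnessing beliefs off-path, is a
perception equilibrium. -/
theorem pooling_sufficient_upper
    {T A : Type*} [Fintype T] [Fintype A] [DecidableEq T] [DecidableEq A]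
    (β : T → ℝ) (hβ : β ∈ stdSimplex ℝ T)
    (u : T → A → (T → ℝ) → ℝ) (hup : UpperPrivacy β u)
    (a : A)
    (μw : T → A → T → ℝ) (hμw : ∀ t a', μw t a' ∈ stdSimplex ℝ T)
    (hwit : ∀ t a', ∃ μ₀ ∈ stdSimplex ℝ T, u t a' (μw t a') ≤ u t a μ₀) :
    PerceptionEqm β u (fun _ a' => if a' = a then 1 else 0)
      (fun t a' => if a' = a then β else μw t a') := by

  obtain ⟨hβ0, hβ1⟩ := hβ
  refine ⟨?_, ?_, ?_, ?_⟩
  · intro t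
    constructor
    · intro a'; dsimp only; split <;> norm_num
    · simp
  · intro t a'
    dsimp only; split
    · exact ⟨hβ0, hβ1⟩
    · exact hμw t a'
  · intro a' hpos t tb
    have haa : a' = a := by
      by_contra h
      have : actProb β (fun _ a' => if a' = a then (1:ℝ) else 0) a' = 0 := by
        unfold actProb; simp [h]
      linarith
    have hact : actProb β (fun _ a' => if a' = a then (1:ℝ) else 0) a = 1 := by
      unfold actProb; simpa using hβ1
    simp [haa, hact]
  · intro t s ⟨hs0, hs1⟩
    have key : ∀ a', u t a' ((fun t a' => if a' = a then β else μw t a') t a') ≤ u t a β := by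
      intro a'
      dsimp only; split
      · next h => rw [h]
      · obtain ⟨μ₀, hμ₀, hle⟩ := hwit t a'
        exact hle.trans (hup t a μ₀ hμ₀)
    calc ExpUtil u (fun t a' => if a' = a then β else μw t a') t s
        ≤ ∑ a', s a' * u t a β := by
          apply Finset.sum_le_sum
          intro a' _
          exact mul_le_mul_of_nonneg_left (key a') (hs0 a')
      _ = u t a β := by rw [← Finset.sum_mul, hs1, one_mul]
      _ = ExpUtil u (fun t a' => if a' = a then β else μw t a') t
            ((fun _ a' => if a' = a then (1:ℝ) else 0) t) := by
          unfold ExpUtil; simp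
end

section
/- (Necessity direction, lower privacy.) In a finite single-player perception game where the decision maker has lower privacy concerns, if ∩_t M(t) = ∅ (no action is potentially optimal at the extremes for all types), then there is no fully pooling perception equilibrium: for every pure action a and every consistent perception τ supporting all types playing a, some type has a strictly profitable deviation. -/
open Finset

theorem LowerPrivacy.exists_lt_of_not_potOptExt
    {T A : Type*} [Fintype T] [DecidableEq T] {β : T → ℝ} {u : T → A → (T → ℝ) → ℝ}
    (hlow : LowerPrivacy u) {t : T} {a : A} (ht : ¬ PotOptExt β u t a)
    {τ : A → T → ℝ} (hτ : ∀ a', τ a' ∈ stdSimplex ℝ T) :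
    ∃ a', u t a β < u t a' (τ a') := by
  obtain ⟨a', ha'⟩ : ∃ a', u t a β < u t a' (dirac t) := by
    simpa only [PotOptExt, not_forall, not_le] using ht
  exact ⟨a', ha'.trans_le (hlow t a' (τ a') (hτ a'))⟩

theorem no_pooling_necessity_lower_general
    {T A : Type*} [Fintype T] [Fintype A] [DecidableEq T] [DecidableEq A]
    (β : T → ℝ)
    (u : T → A → (T → ℝ) → ℝ) (hlow : LowerPrivacy u)
    (hM : ∀ a : A, ∃ t, ¬ PotOptExt β u t a) :
    ∀ (a : A) (τ : T → A → T → ℝ),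
      (∀ t a', τ t a' ∈ stdSimplex ℝ T) →
      Consistent β (fun _ a' => if a' = a then 1 else 0) τ →
      ∃ t a', u t a β < u t a' (τ t a') := by
  intro a τ hτ _
  obtain ⟨t, ht⟩ := hM a
  exact ⟨t, hlow.exists_lt_of_not_potOptExt ht (hτ t)⟩

/-- necessity, lower privacy: if `⋂ₜ M(t) = ∅` then no fully
pooling perception equilibrium exists: for every pure pooled action and every
consistent perception supporting it, some type has a strictly profitable
deviation. -/
theorem no_pooling_necessity_lower
    {T A : Type*} [Fintype T] [Fintype A] [DecidableEq T] [DecidableEq A]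
    (β : T → ℝ) (hβ : β ∈ stdSimplex ℝ T)
    (u : T → A → (T → ℝ) → ℝ) (hlow : LowerPrivacy u)
    (hM : ∀ a : A, ∃ t, ¬ PotOptExt β u t a) :
    ∀ (a : A) (τ : T → A → T → ℝ),
      (∀ t a', τ t a' ∈ stdSimplex ℝ T) →
      Consistent β (fun _ a' => if a' = a then 1 else 0) τ →
      ∃ t a', u t a β < u t a' (τ t a') :=
  no_pooling_necessity_lower_general β u hlow hM
end

section
/- Consider a finite single-player perception game with additively separable utility u(t,a,μ) = v(t,a) − w(t,μ), where types are pairs t = (t_o, t_p) ∈ T_o × T_p, v depends only on (t_o, a), w depends only on the marginal of μ over T_o, each type t has a unique optimal action a_t ∈ argmax_a v(t,a) with a_t ≠ a_{t'} whenever t_o ≠ t'_o, and for every pair of types t, t' with t_o ≠ t'_o, v(t,a_t) − v(t,a_{t'}) > w(t,χ(t)) − w(t,χ(t')). Then there exists a perception τ such that the fully separating strategy σ, where each type t plays a_t with probability 1, forms a perception equilibrium (σ, τ). -/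
open Finset

/-- Claim 1: with separable utility `u = v - w`, `v` depending only
on the outcome-type, `w` depending only on the `T_o`-marginal of the perception,
unique outcome-type-distinct optimal actions, and the gap assumption, there is a
perception `τ` making full separation a perception equilibrium. -/
theorem separating_equilibrium_exists
    {To Tp A : Type*} [Fintype To] [Fintype Tp] [Fintype A]
    [DecidableEq To] [DecidableEq Tp] [DecidableEq A]
    (β : To × Tp → ℝ) (hβ : β ∈ stdSimplex ℝ (To × Tp)) (hfull : ∀ t, 0 < β t)
    (v : To × Tp → A → ℝ) (w : To × Tp → ((To × Tp) → ℝ) → ℝ)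
    (hv : ∀ t t' a, t.1 = t'.1 → v t a = v t' a)
    (hw : ∀ t (μ μ' : (To × Tp) → ℝ),
      (∀ o : To, ∑ tp, μ (o, tp) = ∑ tp, μ' (o, tp)) → w t μ = w t μ')
    (aopt : To × Tp → A)
    (hopt : ∀ t a, a ≠ aopt t → v t a < v t (aopt t))
    (hdist : ∀ t t', t.1 ≠ t'.1 → aopt t ≠ aopt t')
    (hgap : ∀ t t', t.1 ≠ t'.1 →
      w t (dirac t) - w t (dirac t') < v t (aopt t) - v t (aopt t')) :
    ∃ τ : (To × Tp) → A → (To × Tp) → ℝ,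
      PerceptionEqm β (fun t a μ => v t a - w t μ)
        (fun t a => if a = aopt t then 1 else 0) τ := by

  classical
  set σ : (To × Tp) → A → ℝ := fun t a => if a = aopt t then 1 else 0 with hσdef
  have hσnn : ∀ t a, 0 ≤ σ t a := by
    intro t a; simp only [hσdef]; split <;> norm_num
  have hpnn : ∀ a, 0 ≤ actProb β σ a :=
    fun a => Finset.sum_nonneg fun t _ => mul_nonneg (hfull t).le (hσnn t a)
  have hppos : ∀ t', 0 < actProb β σ (aopt t') := by
    intro t'
    have h1 : β t' * σ t' (aopt t') = β t' := by simp [hσdef]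
    have h2 : β t' * σ t' (aopt t') ≤ actProb β σ (aopt t') :=
      Finset.single_le_sum (f := fun t => β t * σ t (aopt t'))
        (fun t _ => mul_nonneg (hfull t).le (hσnn t _)) (Finset.mem_univ t')
    have := hfull t'
    linarith
  set τ : (To × Tp) → A → (To × Tp) → ℝ :=
    fun t a tb => if 0 < actProb β σ a then β tb * σ tb a / actProb β σ a else dirac t tb
    with hτdef
  -- marginal of a dirac measure
  have hdm : ∀ (s : To × Tp) (o : To),
      ∑ tp, dirac s (o, tp) = if o = s.1 then 1 else 0 := by
    intro s o
    by_cases h : o = s.1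
    · subst h
      rw [Finset.sum_eq_single s.2]
      · simp [dirac]
      · intro b _ hb; simp [dirac, Prod.ext_iff, hb]
      · simp
    · simp [dirac, Prod.ext_iff, h]
  -- key vanishing fact
  have hkey : ∀ (t' : To × Tp) (o : To), o ≠ t'.1 → ∀ tp,
      β (o, tp) * σ (o, tp) (aopt t') = 0 := by
    intro t' o ho tp
    have hne : aopt (o, tp) ≠ aopt t' := hdist (o, tp) t' ho
    have : σ (o, tp) (aopt t') = 0 := by
      simp only [hσdef]; exact if_neg fun h => hne h.symm
    rw [this, mul_zero]
  -- marginal of the posterior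
  have hpm : ∀ (t' : To × Tp) (o : To),
      ∑ tp, β (o, tp) * σ (o, tp) (aopt t')
        = if o = t'.1 then actProb β σ (aopt t') else 0 := by
    intro t' o
    by_cases h : o = t'.1
    · subst h
      rw [if_pos rfl]
      rw [actProb, Fintype.sum_prod_type]
      exact (Finset.sum_eq_single t'.1
        (fun o' _ ho' => Finset.sum_eq_zero fun tp _ => hkey t' o' ho' tp)
        (by simp)).symm
    · rw [if_neg h]
      exact Finset.sum_eq_zero fun tp _ => hkey t' o h tp
  -- simplex membership of τ
  have hτsimp : ∀ t a, τ t a ∈ stdSimplex ℝ (To × Tp) := by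
    intro t a
    by_cases hpa : 0 < actProb β σ a
    · refine ⟨fun tb => ?_, ?_⟩
      · simp only [hτdef, if_pos hpa]
        exact div_nonneg (mul_nonneg (hfull tb).le (hσnn tb a)) (hpnn a)
      · simp only [hτdef, if_pos hpa]
        rw [← Finset.sum_div]
        exact div_self (ne_of_gt hpa)
    · refine ⟨fun tb => ?_, ?_⟩
      · simp only [hτdef, if_neg hpa, dirac]
        split <;> norm_num
      · simp only [hτdef, if_neg hpa, dirac]
        simp
  -- the perceived measure after an on-path action is outcome-equivalent to a dirac
  have hW : ∀ t t', w t (τ t (aopt t')) = w t (dirac t') := by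
    intro t t'
    apply hw
    intro o
    simp only [hτdef, if_pos (hppos t')]
    rw [← Finset.sum_div, hpm t' o, hdm t' o]
    by_cases h : o = t'.1
    · rw [if_pos h, if_pos h]; exact div_self (ne_of_gt (hppos t'))
    · rw [if_neg h, if_neg h, zero_div]
  -- pointwise utility comparison
  have hU : ∀ t a, v t a - w t (τ t a) ≤ v t (aopt t) - w t (τ t (aopt t)) := by
    intro t a
    rw [hW t t]
    by_cases hpa : 0 < actProb β σ a
    · obtain ⟨t', ht'⟩ : ∃ t', aopt t' = a := by
        by_contra hc
        push_neg at hc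
        have hz : actProb β σ a = 0 := Finset.sum_eq_zero fun tb _ => by
          have : σ tb a = 0 := by
            simp only [hσdef]; exact if_neg fun h => hc tb h.symm
          rw [this, mul_zero]
        rw [hz] at hpa; exact lt_irrefl 0 hpa
      subst ht'
      rw [hW t t']
      by_cases ho : t'.1 = t.1
      · have hwd : w t (dirac t') = w t (dirac t) :=
          hw t _ _ fun o => by rw [hdm, hdm, ho]
        rw [hwd]
        have hvle : v t (aopt t') ≤ v t (aopt t) := by
          by_cases he : aopt t' = aopt t
          · rw [he]
          · exact (hopt t _ he).le
        linarith
      · have := hgap t t' fun h => ho h.symm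
        linarith
    · have hτa : τ t a = dirac t := funext fun tb => by
        simp only [hτdef]; exact if_neg hpa
      rw [hτa]
      have : v t a ≤ v t (aopt t) := by
        by_cases he : a = aopt t
        · rw [he]
        · exact (hopt t a he).le
      linarith
  refine ⟨τ, ?_, hτsimp, ?_, ?_⟩
  · intro t
    refine ⟨fun a => hσnn t a, ?_⟩
    simp [hσdef]
  · intro a ha t tb
    simp only [hτdef, if_pos ha]
  · intro t s hs
    obtain ⟨hs0, hs1⟩ := hs
    have hR : ExpUtil (fun t a μ => v t a - w t μ) τ t (σ t)
        = v t (aopt t) - w t (τ t (aopt t)) := by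
      simp only [ExpUtil, hσdef, ite_mul, one_mul, zero_mul]
      simp
    rw [hR]
    calc ExpUtil (fun t a μ => v t a - w t μ) τ t s
        = ∑ a, s a * (v t a - w t (τ t a)) := rfl
      _ ≤ ∑ a, s a * (v t (aopt t) - w t (τ t (aopt t))) :=
          Finset.sum_le_sum fun a _ =>
            mul_le_mul_of_nonneg_left (hU t a) (hs0 a)
      _ = (∑ a, s a) * (v t (aopt t) - w t (τ t (aopt t))) := by
          rw [Finset.sum_mul]
      _ = v t (aopt t) - w t (τ t (aopt t)) := by rw [hs1, one_mul]
end

section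
/- In the perception game with T = {ℓ, r}, A = {L, R}, uniform prior, and utility u(t, a, p) = 1_{t matches a} − 2·|p(ℓ) − 1/2|, the set of pure-strategy perception equilibrium outcomes consists exactly of: (i) both types pool on L, (ii) both types pool on R, and (iii) full separation (ℓ plays L, r plays R); in particular, the 'anti-truthful' separating profile where ℓ plays R and r plays L is not an equilibrium outcome. -/
open Finset

/-! Expected utility is linear in the mixed action, so a pure profile is an equilibrium exactly
when no pure deviation is profitable. A perception that identifies the type costs the maximal
penalty `1`, which cancels the match bonus: deviating to an action after which the type is
revealed yields at most `0`. Pooling is sustained by off-path perceptions that reveal the type,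
while the pooled action is met with the uninformative prior and yields at least `0`; under
truthful separation both actions reveal the type, and matching yields exactly `0`. Under the
anti-truthful profile both actions reveal the type as well, so `ℓ` gains the match bonus at no
extra cost by deviating to `L`. -/

section PureProfiles
variable {T A : Type*}

def pointMass [DecidableEq A] (b : A) : A → ℝ := fun a => if a = b then 1 else 0

def pureProfile [DecidableEq A] (f : T → A) : T → A → ℝ := fun t => pointMass (f t)

theorem pointMass_mem_stdSimplex [Fintype A] [DecidableEq A] (b : A) :
    pointMass b ∈ stdSimplex ℝ A :=
  ⟨fun a => by unfold pointMass; split_ifs <;> norm_num, by simp [pointMass]⟩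

theorem expUtil_pointMass [Fintype A] [DecidableEq A] (u : T → A → (T → ℝ) → ℝ)
    (τ : T → A → T → ℝ) (t : T) (b : A) :
    ExpUtil u τ t (pointMass b) = u t b (τ t b) := by
  simp [ExpUtil, pointMass]

theorem expUtil_le_of_forall_le [Fintype A] (u : T → A → (T → ℝ) → ℝ) (τ : T → A → T → ℝ)
    (t : T) {s : A → ℝ} (hs : s ∈ stdSimplex ℝ A) {M : ℝ} (hM : ∀ a, u t a (τ t a) ≤ M) :
    ExpUtil u τ t s ≤ M :=
  calc ∑ a, s a * u t a (τ t a)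
      ≤ ∑ a, s a * M := sum_le_sum fun a _ => mul_le_mul_of_nonneg_left (hM a) (hs.1 a)
    _ = M := by rw [← sum_mul, hs.2, one_mul]

theorem perceptionEqm_pureProfile_iff [Fintype T] [Fintype A] [DecidableEq A] (β : T → ℝ)
    (u : T → A → (T → ℝ) → ℝ) (f : T → A) (τ : T → A → T → ℝ) :
    PerceptionEqm β u (pureProfile f) τ ↔
      (∀ t a, τ t a ∈ stdSimplex ℝ T) ∧ Consistent β (pureProfile f) τ ∧
        ∀ t a, u t a (τ t a) ≤ u t (f t) (τ t (f t)) := by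
  refine ⟨fun ⟨_, hτ, hcons, hbest⟩ => ⟨hτ, hcons, fun t a => ?_⟩, fun ⟨hτ, hcons, hbest⟩ =>
    ⟨fun t => pointMass_mem_stdSimplex (f t), hτ, hcons, fun t s hs => ?_⟩⟩
  · simpa only [pureProfile, expUtil_pointMass] using hbest t _ (pointMass_mem_stdSimplex a)
  · exact (expUtil_le_of_forall_le u τ t hs (hbest t)).trans (expUtil_pointMass u τ t (f t)).ge

theorem consistent_pooling [Fintype T] [DecidableEq A] {β : T → ℝ} (hβ : ∑ t, β t = 1) (a₀ : A)
    (τ₀ : A → T → ℝ) :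
    Consistent β (pureProfile fun _ => a₀) (fun _ a => if a = a₀ then β else τ₀ a) := by
  intro a ha t tb
  by_cases h : a = a₀
  · simp [h, pureProfile, pointMass, actProb, hβ]
  · simp [h, pureProfile, pointMass, actProb] at ha

theorem consistent_truthful [Fintype T] [DecidableEq T] {β : T → ℝ} (hβ : ∀ t, 0 < β t) :
    Consistent β (pureProfile id) (fun _ => pointMass) := by
  intro a _ t tb
  have hprob : actProb β (pureProfile id) a = β a := by
    simp [actProb, pureProfile, pointMass]
  by_cases h : tb = a
  · simp [h, hprob, pureProfile, pointMass, (hβ a).ne']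
  · simp [h, hprob, pureProfile, pointMass, Ne.symm h]

end PureProfiles

theorem pointMass_apply_true_eq_zero_or_one (b : Bool) :
    pointMass b true = 0 ∨ pointMass b true = 1 := by
  cases b <;> simp [pointMass]

theorem aliceU_nonpos_of_revealing (t a : Bool) {p : Bool → ℝ} (hp : p true = 0 ∨ p true = 1) :
    aliceU t a p ≤ 0 := by
  rcases hp with hp | hp <;> simp only [aliceU, hp] <;> split_ifs <;> norm_num

theorem alice_pooling_eqm (a₀ : Bool) :
    PerceptionEqm aliceβ aliceU (pureProfile fun _ => a₀)
      (fun _ a => if a = a₀ then aliceβ else pointMass a) := by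
  refine (perceptionEqm_pureProfile_iff _ _ _ _).2
    ⟨fun _ a => ?_, consistent_pooling (by norm_num [aliceβ]) a₀ _, fun t a => ?_⟩
  · split_ifs
    · exact ⟨fun _ => by norm_num [aliceβ], by norm_num [aliceβ]⟩
    · exact pointMass_mem_stdSimplex a
  · rcases eq_or_ne a a₀ with rfl | h
    · exact le_rfl
    rw [if_neg h, if_pos rfl]
    calc aliceU t a (pointMass a) ≤ 0 :=
        aliceU_nonpos_of_revealing t a (pointMass_apply_true_eq_zero_or_one a)
      _ ≤ aliceU t a₀ aliceβ := by unfold aliceU; split_ifs <;> norm_num [aliceβ]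

theorem alice_truthful_eqm :
    PerceptionEqm aliceβ aliceU (pureProfile id) (fun _ => pointMass) := by
  refine (perceptionEqm_pureProfile_iff _ _ _ _).2
    ⟨fun _ => pointMass_mem_stdSimplex, consistent_truthful fun _ => by norm_num [aliceβ],
      fun t a => ?_⟩
  calc aliceU t a (pointMass a) ≤ 0 :=
        aliceU_nonpos_of_revealing t a (pointMass_apply_true_eq_zero_or_one a)
    _ = aliceU t t (pointMass t) := by cases t <;> norm_num [aliceU, pointMass]

theorem alice_antitruthful_not_eqm (τ : Bool → Bool → Bool → ℝ) :
    ¬ PerceptionEqm aliceβ aliceU (pureProfile not) τ := by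
  intro h
  obtain ⟨-, hcons, hbest⟩ := (perceptionEqm_pureProfile_iff _ _ _ _).1 h
  have hprob (a : Bool) : actProb aliceβ (pureProfile not) a = 1 / 2 := by
    cases a <;> norm_num [actProb, aliceβ, pureProfile, pointMass]
  have hL := hcons true (by rw [hprob]; norm_num) true true
  have hR := hcons false (by rw [hprob]; norm_num) true true
  have := hbest true true
  norm_num [hprob, aliceβ, pureProfile, pointMass] at hL hR
  norm_num [aliceU, hL, hR] at this

theorem bool_fun_cases (f : Bool → Bool) :
    f = (fun _ => true) ∨ f = (fun _ => false) ∨ f = id ∨ f = not := by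
  cases ht : f true <;> cases hf : f false <;> simp [funext_iff, ht, hf]

/-- pure-strategy perception equilibrium outcomes of Alice's game
are exactly pooling on L, pooling on R, and truthful separation; in particular
the anti-truthful profile is not an equilibrium outcome. -/
theorem alice_pure_equilibrium_outcomes (f : Bool → Bool) :
    (∃ τ : Bool → Bool → Bool → ℝ,
        PerceptionEqm aliceβ aliceU (fun t a => if a = f t then 1 else 0) τ) ↔
      (∀ t, f t = true) ∨ (∀ t, f t = false) ∨ (∀ t, f t = t) := by
  change (∃ τ, PerceptionEqm aliceβ aliceU (pureProfile f) τ) ↔ _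
  constructor
  · rintro ⟨τ, hτ⟩
    rcases bool_fun_cases f with rfl | rfl | rfl | rfl
    · exact Or.inl fun _ => rfl
    · exact Or.inr (Or.inl fun _ => rfl)
    · exact Or.inr (Or.inr fun _ => rfl)
    · exact absurd hτ (alice_antitruthful_not_eqm τ)
  · rintro (h | h | h) <;> obtain rfl : f = _ := funext h
    · exact ⟨_, alice_pooling_eqm true⟩
    · exact ⟨_, alice_pooling_eqm false⟩
    · exact ⟨_, alice_truthful_eqm⟩
end
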